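/- Assume f_b has two distinct roots x_{b1} < x_{b2} and there exists ã* ∈ (x_{b1}, x_{b2}) with F(ã*)·e^{ã*} = F'(ã*)·(e^{ã*} + c_b). Then for every x ∈ [ã*, x_{b2}) there exists a unique β(x) > x_s such that q_F(x, β(x)) = 0; the function β is strictly decreasing on [ã*, x_{b2}); and β(ã*) = b*. -/

import Mathlib

/-!
With `ν = r/μ` and `κ = √(2μ/σ²)`, write `F(x) = K_{ν-1}(κ(x-θ))` and `G(x) = K_{ν-1}(κ(θ-x))`
where `K_a(c) = ∫₀^∞ uᵃ e^{cu - u²/2} du`. Differentiating under the integral and integrating by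
parts in `u` give `K_a' = K_{a+1}` and `K_{a+1} = a K_{a-1} + c K_a`, so `F` and `G` solve
`(σ²/2) y'' = r y + μ(x - θ) y'`; by Abel's identity `W(x) = W(θ) e^{μ(x-θ)²/σ²}`.

For `f_c(s) = μθ + σ²/2 - r - μs + r c e⁻ˢ` (so `f_s = f_{c_s}`, `f_b = f_{-c_b}`), the function
`R_c = (F eᶻ - F'(eᶻ - c)) / W` has derivative `Ψ eᶻ f_c` and vanishes at `-∞`, hence
`q_F(x, z) = R_{-c_b}(x) - R_{c_s}(z)`. As `f_s` decreases through `x_s`, `R_{c_s}` increases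
(staying positive) up to `x_s`, then strictly decreases and vanishes at `b*`. As `f_b > 0` between
its roots, `R_{-c_b}` increases on `[ã*, x_{b2}]` from `R_{-c_b}(ã*) = 0`, and it stays below
`R_{c_s}` because `F' > 0`. So `β = (R_{c_s}|_{[x_s, ∞)})⁻¹ ∘ R_{-c_b}` is the required function.
-/

open Real MeasureTheory Set Filter Topology

noncomputable def gaussMoment (a c : ℝ) : ℝ := ∫ u in Ioi (0 : ℝ), u ^ a * exp (c * u - u ^ 2 / 2)

lemma continuousOn_rpow_mul_exp (a c : ℝ) :
    ContinuousOn (fun u : ℝ => u ^ a * exp (c * u - u ^ 2 / 2)) (Ioi 0) :=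
  (continuousOn_id.rpow_const fun _ hu => Or.inl (ne_of_gt hu)).mul (by fun_prop)

lemma rpow_mul_exp_le {u : ℝ} (hu : 0 ≤ u) (a c : ℝ) :
    u ^ a * exp (c * u - u ^ 2 / 2) ≤ exp (c ^ 2) * (u ^ a * exp (-(1 / 4) * u ^ 2)) := by
  rw [mul_left_comm, ← exp_add]
  gcongr
  nlinarith [sq_nonneg (u / 2 - c)]

section GaussMoment

variable {a : ℝ}

lemma integrableOn_rpow_mul_exp (ha : -1 < a) (c : ℝ) :
    IntegrableOn (fun u : ℝ => u ^ a * exp (c * u - u ^ 2 / 2)) (Ioi 0) := by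
  refine ((integrableOn_rpow_mul_exp_neg_mul_sq (b := 1 / 4) (by norm_num) ha).const_mul
    (exp (c ^ 2))).mono' ((continuousOn_rpow_mul_exp a c).aestronglyMeasurable measurableSet_Ioi) ?_
  filter_upwards [ae_restrict_mem measurableSet_Ioi] with u (hu : 0 < u)
  rw [norm_of_nonneg (by positivity)]
  exact rpow_mul_exp_le hu.le a c

lemma gaussMoment_pos (ha : -1 < a) (c : ℝ) : 0 < gaussMoment a c := by
  have hpos : ∀ u ∈ Ioi (0 : ℝ), 0 < u ^ a * exp (c * u - u ^ 2 / 2) := fun u (hu : 0 < u) => by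
    positivity
  rw [gaussMoment, setIntegral_pos_iff_support_of_nonneg_ae
    ((ae_restrict_mem measurableSet_Ioi).mono fun u hu => (hpos u hu).le)
    (integrableOn_rpow_mul_exp ha c)]
  have hsub : Ioi (0 : ℝ) ⊆
      Function.support (fun u : ℝ => u ^ a * exp (c * u - u ^ 2 / 2)) ∩ Ioi 0 :=
    fun u hu => ⟨(hpos u hu).ne', hu⟩
  exact (by simp : (0 : ENNReal) < volume (Ioi (0 : ℝ))).trans_le (measure_mono hsub)

lemma hasDerivAt_gaussMoment (ha : -1 < a) (c : ℝ) :
    HasDerivAt (gaussMoment a) (gaussMoment (a + 1) c) c := by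
  refine (hasDerivAt_integral_of_dominated_loc_of_deriv_le (μ := volume.restrict (Ioi 0))
    (F' := fun c u => u ^ (a + 1) * exp (c * u - u ^ 2 / 2))
    (bound := fun u => u ^ (a + 1) * exp ((|c| + 1) * u - u ^ 2 / 2))
    (Metric.ball_mem_nhds c one_pos)
    (.of_forall fun c' => (continuousOn_rpow_mul_exp a c').aestronglyMeasurable measurableSet_Ioi)
    (integrableOn_rpow_mul_exp ha c)
    ((continuousOn_rpow_mul_exp _ c).aestronglyMeasurable measurableSet_Ioi) ?_
    (integrableOn_rpow_mul_exp (by linarith) _) ?_).2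
  · filter_upwards [ae_restrict_mem measurableSet_Ioi] with u (hu : 0 < u) c' hc'
    rw [norm_of_nonneg (by positivity)]
    have : c' ≤ |c| + 1 := by
      linarith [(abs_lt.1 (Metric.mem_ball.1 hc')).2, le_abs_self c, Real.dist_eq c' c]
    gcongr
  · filter_upwards [ae_restrict_mem measurableSet_Ioi] with u (hu : 0 < u) c' _
    refine (((hasDerivAt_mul_const u).sub_const (u ^ 2 / 2)).exp.const_mul (u ^ a)
      (x := c')).congr_deriv ?_
    rw [rpow_add_one hu.ne']
    ring

lemma gaussMoment_add_one (ha : 0 < a) (c : ℝ) :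
    gaussMoment (a + 1) c = a * gaussMoment (a - 1) c + c * gaussMoment a c := by
  set g : ℝ → ℝ := fun u => u ^ a * exp (c * u - u ^ 2 / 2)
  have hderiv : ∀ u ∈ Ioi (0 : ℝ), HasDerivAt g (a * (u ^ (a - 1) * exp (c * u - u ^ 2 / 2)) +
      c * (u ^ a * exp (c * u - u ^ 2 / 2)) - u ^ (a + 1) * exp (c * u - u ^ 2 / 2)) u := by
    intro u (hu : 0 < u)
    refine ((hasDerivAt_rpow_const (Or.inl hu.ne')).fun_mul
      (((hasDerivAt_id' u).const_mul c).fun_sub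
        ((hasDerivAt_pow 2 u).div_const 2)).exp).congr_deriv ?_
    rw [rpow_add_one hu.ne']
    ring
  have hlim : Tendsto g atTop (𝓝 0) := by
    have hgauss := (rpow_mul_exp_neg_mul_sq_isLittleO_exp_neg (b := 1 / 4) (by norm_num)
      a).tendsto_zero_of_tendsto
      (tendsto_exp_atBot.comp (tendsto_id.const_mul_atTop_of_neg (by norm_num)))
    refine squeeze_zero' (eventually_gt_atTop 0 |>.mono fun u hu => by positivity)
      (eventually_gt_atTop 0 |>.mono fun u hu => rpow_mul_exp_le hu.le a c) ?_
    simpa using hgauss.const_mul (exp (c ^ 2))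
  have hg0 : ContinuousWithinAt g (Ici 0) 0 :=
    ((continuousAt_rpow_const 0 a (Or.inr ha.le)).mul (by fun_prop)).continuousWithinAt
  have hI : ∀ b : ℝ, -1 < b → ∀ k : ℝ,
      IntegrableOn (fun u : ℝ => k * (u ^ b * exp (c * u - u ^ 2 / 2))) (Ioi 0) :=
    fun b hb k => (integrableOn_rpow_mul_exp hb c).const_mul k
  -- `∫₀^∞ g' = 0` because `g` vanishes at both ends
  have h := integral_Ioi_of_hasDerivAt_of_tendsto hg0 hderiv
    (((hI _ (by linarith) a).add (hI _ (by linarith) c)).sub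
      (integrableOn_rpow_mul_exp (by linarith) c)) hlim
  rw [integral_sub ((hI _ (by linarith) a).fun_add (hI _ (by linarith) c))
      (integrableOn_rpow_mul_exp (by linarith) c),
    integral_add (hI _ (by linarith) a) (hI _ (by linarith) c),
    integral_const_mul, integral_const_mul] at h
  simp only [g, zero_rpow ha.ne', zero_mul, sub_zero] at h
  unfold gaussMoment
  linarith

lemma gaussMoment_strictMono (ha : -1 < a) : StrictMono (gaussMoment a) :=
  strictMono_of_hasDerivAt_pos (hasDerivAt_gaussMoment ha) fun c => gaussMoment_pos (by linarith) c

end GaussMoment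

noncomputable def affineGaussMoment (a κ θ x : ℝ) : ℝ := gaussMoment a (κ * (x - θ))

section AffineGaussMoment

variable {a : ℝ}

lemma hasDerivAt_affineGaussMoment (ha : -1 < a) (κ θ x : ℝ) :
    HasDerivAt (affineGaussMoment a κ θ) (κ * affineGaussMoment (a + 1) κ θ x) x :=
  ((hasDerivAt_gaussMoment ha _).comp x (((hasDerivAt_id' x).sub_const θ).const_mul κ)).congr_deriv
    (by rw [mul_one, mul_comm]; rfl)

lemma deriv_affineGaussMoment (ha : -1 < a) (κ θ : ℝ) :
    deriv (affineGaussMoment a κ θ) = fun x => κ * affineGaussMoment (a + 1) κ θ x :=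
  funext fun x => (hasDerivAt_affineGaussMoment ha κ θ x).deriv

lemma monotone_affineGaussMoment (ha : -1 < a) {κ : ℝ} (hκ : 0 ≤ κ) (θ : ℝ) :
    Monotone (affineGaussMoment a κ θ) := fun x y hxy =>
  (gaussMoment_strictMono ha).monotone (by gcongr)

lemma affineGaussMoment_ode (ha : -1 < a) (κ θ x : ℝ) :
    κ * (κ * affineGaussMoment (a + 1 + 1) κ θ x) =
      κ ^ 2 * (a + 1) * affineGaussMoment a κ θ x +
        κ ^ 2 * (x - θ) * (κ * affineGaussMoment (a + 1) κ θ x) := by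
  simp only [affineGaussMoment]
  rw [gaussMoment_add_one (by linarith), add_sub_cancel_right]
  ring

end AffineGaussMoment

lemma hasDerivAt_wronskian {f f' g g' : ℝ → ℝ} {f'' g'' p q x : ℝ}
    (hf : HasDerivAt f (f' x) x) (hf' : HasDerivAt f' f'' x)
    (hg : HasDerivAt g (g' x) x) (hg' : HasDerivAt g' g'' x)
    (hfode : f'' = p * f x + q * f' x) (hgode : g'' = p * g x + q * g' x) :
    HasDerivAt (fun y => f' y * g y - f y * g' y) (q * (f' x * g x - f x * g' x)) x :=
  ((hf'.fun_mul hg).fun_sub (hf.fun_mul hg')).congr_deriv (by rw [hfode, hgode]; ring)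

lemma hasDerivAt_mul_exp_sq (w b θ x : ℝ) :
    HasDerivAt (fun x => w * exp (b * (x - θ) ^ 2))
      (2 * b * (x - θ) * (w * exp (b * (x - θ) ^ 2))) x :=
  (((((hasDerivAt_id' x).sub_const θ).fun_pow 2).const_mul b).exp.const_mul w).congr_deriv
    (by push_cast; ring)

lemma tendsto_mul_exp_sq_atBot {w b : ℝ} (hw : 0 < w) (hb : 0 < b) (θ : ℝ) :
    Tendsto (fun x => w * exp (b * (x - θ) ^ 2)) atBot atTop := by
  have hsub := tendsto_atBot_add_const_right atBot (-θ) tendsto_id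
  have hsq : Tendsto (fun x => (x - θ) ^ 2) atBot atTop := by
    simpa [sq, sub_eq_add_neg] using hsub.atBot_mul_atBot₀ hsub
  exact (tendsto_exp_atTop.comp (hsq.const_mul_atTop hb)).const_mul_atTop hw

lemma eq_mul_exp_sq_of_hasDerivAt {w : ℝ → ℝ} {b θ : ℝ}
    (hw : ∀ x, HasDerivAt w (2 * b * (x - θ) * w x) x) (x : ℝ) :
    w x = w θ * exp (b * (x - θ) ^ 2) := by
  have hv : ∀ y, HasDerivAt (fun y => w y * exp (-(b * (y - θ) ^ 2))) 0 y := fun y =>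
    ((hw y).fun_mul (((((hasDerivAt_id' y).sub_const θ).fun_pow 2).const_mul b).neg.exp))
      |>.congr_deriv (by push_cast; ring)
  have hconst := is_const_of_deriv_eq_zero (fun y => (hv y).differentiableAt)
    (fun y => (hv y).deriv) x θ
  norm_num at hconst
  rw [← hconst, mul_assoc, ← exp_add, neg_add_cancel, exp_zero, mul_one]

lemma wronskian_affineGaussMoment {a : ℝ} (ha : -1 < a) (κ θ : ℝ) {W : ℝ → ℝ}
    (hW : ∀ x, W x = deriv (affineGaussMoment a κ θ) x * affineGaussMoment a (-κ) θ x -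
      affineGaussMoment a κ θ x * deriv (affineGaussMoment a (-κ) θ) x) (x : ℝ) :
    W x = W θ * exp (κ ^ 2 / 2 * (x - θ) ^ 2) := by
  refine eq_mul_exp_sq_of_hasDerivAt (fun x => ?_) x
  have hderiv : ∀ κ, HasDerivAt (fun x => κ * affineGaussMoment (a + 1) κ θ x)
      (κ * (κ * affineGaussMoment (a + 1 + 1) κ θ x)) x := fun κ =>
    (hasDerivAt_affineGaussMoment (by linarith) κ θ x).const_mul κ
  simp only [funext hW, deriv_affineGaussMoment ha]
  convert hasDerivAt_wronskian (hasDerivAt_affineGaussMoment ha κ θ x) (hderiv κ)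
    (hasDerivAt_affineGaussMoment ha (-κ) θ x) (hderiv (-κ)) (p := κ ^ 2 * (a + 1))
    (q := κ ^ 2 * (x - θ)) (affineGaussMoment_ode ha κ θ x)
    (by rw [affineGaussMoment_ode ha (-κ) θ x, neg_sq]) using 1
  ring

/-- `R_c(z) = ∫_{-∞}^z Ψ(s) eˢ f_c(s) ds` in closed form (`integral_Iic_eq_smoothFit_ou`); its
zeros for `c = c_s` and `c = -c_b` are the equations defining `b*` and `ã*`. -/
noncomputable def smoothFit (F F' W : ℝ → ℝ) (c z : ℝ) : ℝ :=
  (F z * exp z - F' z * (exp z - c)) / W z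

section SmoothFit

variable {F F' W : ℝ → ℝ}

lemma hasDerivAt_smoothFit {μ σ θ r c x : ℝ} (hσ : σ ≠ 0) (hF : HasDerivAt F (F' x) x)
    (hF' : HasDerivAt F' (2 / σ ^ 2 * (r * F x + μ * (x - θ) * F' x)) x)
    (hW : HasDerivAt W (2 * μ / σ ^ 2 * (x - θ) * W x) x) (hWx : W x ≠ 0) :
    HasDerivAt (smoothFit F F' W c)
      (2 * F x / (σ ^ 2 * W x) * exp x * (μ * θ + σ ^ 2 / 2 - r - μ * x + r * c * exp (-x))) x := by
  refine (((hF.fun_mul (hasDerivAt_exp x)).fun_sub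
    (hF'.fun_mul ((hasDerivAt_exp x).sub_const c))).div hW hWx).congr_deriv ?_
  rw [exp_neg]
  field_simp
  ring

lemma smoothFit_eq_zero {c z : ℝ} (h : F z * exp z = F' z * (exp z - c)) :
    smoothFit F F' W c z = 0 :=
  div_eq_zero_iff.2 (Or.inl (sub_eq_zero.2 h))

lemma smoothFit_lt_smoothFit {c c' x : ℝ} (hF' : 0 < F' x) (hW : 0 < W x) (hc : c < c') :
    smoothFit F F' W c x < smoothFit F F' W c' x :=
  div_lt_div_of_pos_right (by nlinarith) hW

lemma tendsto_smoothFit_atBot (hF : Monotone F) (hF' : Monotone F') (hF0 : ∀ x, 0 ≤ F x)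
    (hF'0 : ∀ x, 0 ≤ F' x) (hW : Tendsto W atBot atTop) (c : ℝ) :
    Tendsto (smoothFit F F' W c) atBot (𝓝 0) := by
  set B := F 0 + F' 0 * (1 + |c|)
  have hbound : ∀ z ≤ 0, |F z * exp z - F' z * (exp z - c)| ≤ B := by
    intro z hz
    have hexp : |exp z - c| ≤ 1 + |c| :=
      (abs_sub _ _).trans (by rw [abs_of_pos (exp_pos z)]; linarith [exp_le_one_iff.2 hz])
    calc |F z * exp z - F' z * (exp z - c)| ≤ F z * exp z + F' z * |exp z - c| := by
          refine (abs_sub _ _).trans_eq ?_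
          rw [abs_mul, abs_mul, abs_of_nonneg (hF0 z), abs_of_pos (exp_pos z),
            abs_of_nonneg (hF'0 z)]
      _ ≤ F 0 * 1 + F' 0 * (1 + |c|) :=
          add_le_add (mul_le_mul (hF hz) (exp_le_one_iff.2 hz) (exp_pos z).le (hF0 0))
            (mul_le_mul (hF' hz) hexp (abs_nonneg _) (hF'0 0))
      _ = B := by ring
  exact tendsto_bdd_div_atTop_nhds_zero
    (eventually_le_atBot 0 |>.mono fun z hz => (abs_le.1 (hbound z hz)).1)
    (eventually_le_atBot 0 |>.mono fun z hz => (abs_le.1 (hbound z hz)).2) hW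

end SmoothFit

lemma abs_exp_mul_le {s z : ℝ} (hs : s ≤ z) (A m d : ℝ) :
    |exp s * (A - m * s + d * exp (-s))| ≤ |A| * exp z + |m| * (exp (2 * z) + 1) + |d| := by
  have hs_exp : |s| * exp s ≤ exp (2 * z) + 1 := by
    have hs_abs : |s| ≤ exp s + exp (-s) := abs_le.2
      ⟨by linarith [add_one_le_exp (-s), exp_pos s], by linarith [add_one_le_exp s, exp_pos (-s)]⟩
    calc |s| * exp s ≤ (exp s + exp (-s)) * exp s := by gcongr
      _ = exp (2 * s) + 1 := by
          rw [add_mul, ← exp_add, ← exp_add, neg_add_cancel, exp_zero, two_mul]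
      _ ≤ exp (2 * z) + 1 := by gcongr
  calc |exp s * (A - m * s + d * exp (-s))| = |A * exp s - m * (s * exp s) + d| := by
        rw [exp_neg]
        field_simp
    _ ≤ |A| * exp s + |m| * (|s| * exp s) + |d| := by
        refine (abs_add_le _ _).trans ?_
        gcongr
        refine (abs_sub _ _).trans_eq ?_
        rw [abs_mul, abs_mul, abs_mul, abs_of_pos (exp_pos s)]
    _ ≤ _ := by gcongr

lemma integrableOn_Iic_mul_exp_mul {ψ : ℝ → ℝ} {C b θ z : ℝ} (hψ : Continuous ψ) (hb : 0 < b)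
    (hψle : ∀ s ≤ z, |ψ s| ≤ C * exp (-b * (s - θ) ^ 2)) (A m d : ℝ) :
    IntegrableOn (fun s => ψ s * exp s * (A - m * s + d * exp (-s))) (Iic z) := by
  set M := |A| * exp z + |m| * (exp (2 * z) + 1) + |d|
  refine Integrable.mono' (((integrable_exp_neg_mul_sq hb).comp_sub_right θ).const_mul
    (C * M)).integrableOn (by fun_prop : Continuous _).aestronglyMeasurable ?_
  filter_upwards [ae_restrict_mem measurableSet_Iic] with s (hs : s ≤ z)
  rw [norm_eq_abs, mul_assoc, abs_mul]
  calc |ψ s| * |exp s * (A - m * s + d * exp (-s))| ≤ C * exp (-b * (s - θ) ^ 2) * M :=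
        mul_le_mul (hψle s hs) (abs_exp_mul_le hs A m d) (abs_nonneg _)
          ((abs_nonneg _).trans (hψle s hs))
    _ = C * M * exp (-b * (s - θ) ^ 2) := by ring

section OrnsteinUhlenbeck

variable {μ σ θ r w : ℝ} {W : ℝ → ℝ}

-- the paper's `F` and `G`
local notation "𝐅" => affineGaussMoment (r / μ - 1) (√(2 * μ / σ ^ 2)) θ

local notation "𝐆" => fun x => gaussMoment (r / μ - 1) (√(2 * μ / σ ^ 2) * (θ - x))

lemma wronskian_ou (hμ : 0 < μ) (hσ : σ ≠ 0) (hr : 0 < r)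
    (hW : ∀ x, W x = deriv 𝐅 x * 𝐆 x - 𝐅 x * deriv 𝐆 x) (x : ℝ) :
    W x = W θ * exp (μ / σ ^ 2 * (x - θ) ^ 2) := by
  have hG : (𝐆) = affineGaussMoment (r / μ - 1) (-√(2 * μ / σ ^ 2)) θ := funext fun x => by
    simp only [affineGaussMoment, neg_mul, ← mul_neg, neg_sub]
  rw [hG] at hW
  rw [wronskian_affineGaussMoment (by linarith [div_pos hr hμ]) _ θ hW x,
    sq_sqrt (by positivity)]
  ring_nf

lemma deriv_ouF_pos (hμ : 0 < μ) (hσ : σ ≠ 0) (hr : 0 < r) (x : ℝ) : 0 < deriv 𝐅 x := by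
  have ha : -1 < r / μ - 1 := by linarith [div_pos hr hμ]
  rw [deriv_affineGaussMoment ha]
  exact mul_pos (sqrt_pos.2 (by positivity)) (gaussMoment_pos (by linarith) _)

lemma hasDerivAt_deriv_ouF (hμ : 0 < μ) (hσ : σ ≠ 0) (hr : 0 < r) (x : ℝ) :
    HasDerivAt (deriv 𝐅) (2 / σ ^ 2 * (r * 𝐅 x + μ * (x - θ) * deriv 𝐅 x)) x := by
  have ha : -1 < r / μ - 1 := by linarith [div_pos hr hμ]
  rw [deriv_affineGaussMoment ha]
  refine ((hasDerivAt_affineGaussMoment (by linarith) _ θ x).const_mul _).congr_deriv ?_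
  rw [affineGaussMoment_ode ha, sq_sqrt (by positivity)]
  field_simp
  ring

lemma hasDerivAt_smoothFit_ou (hμ : 0 < μ) (hσ : σ ≠ 0) (hr : 0 < r) (hw : 0 < w)
    (hW : ∀ x, W x = w * exp (μ / σ ^ 2 * (x - θ) ^ 2)) (c x : ℝ) :
    HasDerivAt (smoothFit 𝐅 (deriv 𝐅) W c)
      (2 * 𝐅 x / (σ ^ 2 * W x) * exp x * (μ * θ + σ ^ 2 / 2 - r - μ * x + r * c * exp (-x))) x := by
  have ha : -1 < r / μ - 1 := by linarith [div_pos hr hμ]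
  obtain rfl : W = _ := funext hW
  exact hasDerivAt_smoothFit hσ (hasDerivAt_affineGaussMoment ha _ θ x).differentiableAt.hasDerivAt
    (hasDerivAt_deriv_ouF hμ hσ hr x)
    ((hasDerivAt_mul_exp_sq w _ θ x).congr_deriv (by ring)) (by positivity)

lemma tendsto_smoothFit_ou_atBot (hμ : 0 < μ) (hσ : σ ≠ 0) (hr : 0 < r) (hw : 0 < w)
    (hW : ∀ x, W x = w * exp (μ / σ ^ 2 * (x - θ) ^ 2)) (c : ℝ) :
    Tendsto (smoothFit 𝐅 (deriv 𝐅) W c) atBot (𝓝 0) := by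
  have ha : -1 < r / μ - 1 := by linarith [div_pos hr hμ]
  have hκ : 0 ≤ √(2 * μ / σ ^ 2) := sqrt_nonneg _
  refine tendsto_smoothFit_atBot (monotone_affineGaussMoment ha hκ θ) ?_
    (fun x => (gaussMoment_pos ha _).le) (fun x => ?_) ?_ c
  · rw [deriv_affineGaussMoment ha]
    exact (monotone_affineGaussMoment (by linarith) hκ θ).const_mul hκ
  · rw [deriv_affineGaussMoment ha]
    exact mul_nonneg hκ (gaussMoment_pos (by linarith) _).le
  · rw [funext hW]
    exact tendsto_mul_exp_sq_atBot hw (by positivity) θ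

lemma integral_Iic_eq_smoothFit_ou (hμ : 0 < μ) (hσ : σ ≠ 0) (hr : 0 < r) (hw : 0 < w)
    (hW : ∀ x, W x = w * exp (μ / σ ^ 2 * (x - θ) ^ 2)) (c z : ℝ) :
    ∫ s in Iic z, 2 * 𝐅 s / (σ ^ 2 * W s) * exp s *
        (μ * θ + σ ^ 2 / 2 - r - μ * s + r * c * exp (-s)) = smoothFit 𝐅 (deriv 𝐅) W c z := by
  have ha : -1 < r / μ - 1 := by linarith [div_pos hr hμ]
  refine (integral_Iic_of_hasDerivAt_of_tendsto'
    (fun x _ => hasDerivAt_smoothFit_ou hμ hσ hr hw hW c x) ?_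
    (tendsto_smoothFit_ou_atBot hμ hσ hr hw hW c)).trans (sub_zero _)
  obtain rfl : W = _ := funext hW
  have hF : Continuous 𝐅 := continuous_iff_continuousAt.2 fun x =>
    (hasDerivAt_affineGaussMoment ha _ θ x).continuousAt
  beta_reduce
  refine integrableOn_Iic_mul_exp_mul (C := 2 * 𝐅 z / (σ ^ 2 * w)) (b := μ / σ ^ 2) (θ := θ)
    (ψ := fun s => 2 * 𝐅 s / (σ ^ 2 * (w * exp (μ / σ ^ 2 * (s - θ) ^ 2))))
    ((continuous_const.mul hF).div (by fun_prop) fun x => by positivity) (by positivity)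
    (fun s hs => ?_) _ _ _
  have hFs := gaussMoment_pos ha (√(2 * μ / σ ^ 2) * (s - θ))
  calc |2 * 𝐅 s / (σ ^ 2 * (w * exp (μ / σ ^ 2 * (s - θ) ^ 2)))|
      = 2 * 𝐅 s / (σ ^ 2 * w) * exp (-(μ / σ ^ 2) * (s - θ) ^ 2) := by
        rw [abs_of_pos (by unfold affineGaussMoment; positivity), neg_mul, exp_neg]
        field_simp
    _ ≤ 2 * 𝐅 z / (σ ^ 2 * w) * exp (-(μ / σ ^ 2) * (s - θ) ^ 2) := by
        gcongr
        exact monotone_affineGaussMoment ha (sqrt_nonneg _) θ hs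

end OrnsteinUhlenbeck

lemma strictAnti_sub_mul_add_mul_exp_neg (A : ℝ) {m d : ℝ} (hm : 0 < m) (hd : 0 ≤ d) :
    StrictAnti fun x => A - m * x + d * exp (-x) := fun x y hxy => by
  have := mul_le_mul_of_nonneg_left (exp_le_exp.2 (neg_le_neg hxy.le)) hd
  simp only
  nlinarith

lemma strictConcaveOn_sub_mul_sub_mul_exp_neg (A m : ℝ) {d : ℝ} (hd : 0 < d) :
    StrictConcaveOn ℝ univ fun x => A - m * x - d * exp (-x) := by
  have hderiv : deriv (fun x => A - m * x - d * exp (-x)) = fun x => -m + d * exp (-x) :=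
    funext fun x => ((((hasDerivAt_id' x).const_mul m).const_sub A).fun_sub
      ((hasDerivAt_neg x).exp.const_mul d)).deriv.trans (by ring)
  refine StrictAnti.strictConcaveOn_univ_of_deriv (by fun_prop) ?_
  rw [hderiv]
  intro x y hxy
  have := mul_lt_mul_of_pos_left (exp_lt_exp.2 (neg_lt_neg hxy)) hd
  simp only
  linarith

lemma StrictConcaveOn.pos_of_mem_Ioo {f : ℝ → ℝ} {a b x : ℝ} (hf : StrictConcaveOn ℝ univ f)
    (ha : f a = 0) (hb : f b = 0) (hx : x ∈ Ioo a b) : 0 < f x := by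
  have hab : a < b := hx.1.trans hx.2
  simpa [ha, hb] using
    hf.lt_on_openSegment (mem_univ a) (mem_univ b) hab.ne (by rwa [openSegment_eq_Ioo hab])

lemma strictMonoOn_Iic_strictAntiOn_Ici_of_hasDerivAt {Q w f : ℝ → ℝ} {x₀ : ℝ}
    (hQ : ∀ x, HasDerivAt Q (w x * f x) x) (hw : ∀ x, 0 < w x) (hf : StrictAnti f)
    (hx₀ : f x₀ = 0) : StrictMonoOn Q (Iic x₀) ∧ StrictAntiOn Q (Ici x₀) := by
  have hcont : Continuous Q := continuous_iff_continuousAt.2 fun x => (hQ x).continuousAt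
  refine ⟨strictMonoOn_of_hasDerivWithinAt_pos (convex_Iic x₀) hcont.continuousOn
    (fun x _ => (hQ x).hasDerivWithinAt) fun x hx => mul_pos (hw x) ?_,
    strictAntiOn_of_hasDerivWithinAt_neg (convex_Ici x₀) hcont.continuousOn
    (fun x _ => (hQ x).hasDerivWithinAt) fun x hx => mul_neg_of_pos_of_neg (hw x) ?_⟩
  · rw [interior_Iic] at hx
    exact hx₀ ▸ hf hx
  · rw [interior_Ici] at hx
    exact hx₀ ▸ hf hx

lemma StrictMonoOn.pos_of_tendsto_atBot {Q : ℝ → ℝ} {x₀ z : ℝ} (hQ : StrictMonoOn Q (Iic x₀))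
    (hlim : Tendsto Q atBot (𝓝 0)) (hz : z ≤ x₀) : 0 < Q z := by
  have hle : 0 ≤ Q (z - 1) := le_of_tendsto hlim <| (eventually_le_atBot (z - 1)).mono
    fun t ht => hQ.monotoneOn (mem_Iic.2 (by linarith)) (mem_Iic.2 (by linarith)) ht
  exact hle.trans_lt (hQ (mem_Iic.2 (by linarith)) (mem_Iic.2 hz) (by linarith))

lemma exists_strictAntiOn_inverse_comp {P Q : ℝ → ℝ} {s a e b : ℝ} (hae : a < e) (hsb : s < b)
    (hQc : ContinuousOn Q (Ici s)) (hQ : StrictAntiOn Q (Ici s)) (hP : StrictMonoOn P (Ico a e))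
    (hPa : P a = Q b) (hPs : ∀ x ∈ Ico a e, P x < Q s) :
    ∃ β : ℝ → ℝ, (∀ x ∈ Ico a e, s < β x ∧ Q (β x) = P x ∧ ∀ z, s < z → Q z = P x → z = β x) ∧
      StrictAntiOn β (Ico a e) ∧ β a = b := by
  have ha : a ∈ Ico a e := ⟨le_rfl, hae⟩
  have hex : ∀ x ∈ Ico a e, ∃ z, s < z ∧ Q z = P x := fun x hx => by
    have hPx : P x ∈ Ico (Q b) (Q s) := ⟨hPa ▸ hP.monotoneOn ha hx hx.1, hPs x hx⟩
    obtain ⟨z, hz, hQz⟩ := intermediate_value_Ioc' hsb.le (hQc.mono Icc_subset_Ici_self) hPx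
    exact ⟨z, hz.1, hQz⟩
  choose! β hβ using hex
  have huniq : ∀ x ∈ Ico a e, ∀ z, s < z → Q z = P x → z = β x := fun x hx z hz hQz =>
    hQ.injOn (mem_Ici.2 hz.le) (mem_Ici.2 (hβ x hx).1.le) (hQz.trans (hβ x hx).2.symm)
  refine ⟨β, fun x hx => ⟨(hβ x hx).1, (hβ x hx).2, huniq x hx⟩, fun x hx y hy hxy => ?_,
    (huniq a ha b hsb hPa.symm).symm⟩
  rw [← hQ.lt_iff_gt (mem_Ici.2 (hβ x hx).1.le) (mem_Ici.2 (hβ y hy).1.le), (hβ x hx).2,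
    (hβ y hy).2]
  exact hP hx hy hxy

theorem exists_strictAntiOn_crossing {P Q w f_s f_b : ℝ → ℝ} {x_s xb1 xb2 astar bstar : ℝ}
    (hP : ∀ x, HasDerivAt P (w x * f_b x) x) (hQ : ∀ x, HasDerivAt Q (w x * f_s x) x)
    (hw : ∀ x, 0 < w x) (hQlim : Tendsto Q atBot (𝓝 0)) (hPQ : ∀ x, P x < Q x)
    (hfs : StrictAnti f_s) (hxs : f_s x_s = 0) (hfb : StrictConcaveOn ℝ univ f_b)
    (hroot1 : f_b xb1 = 0) (hroot2 : f_b xb2 = 0) (hfbs : ∀ x, f_b x < f_s x)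
    (hastar : astar ∈ Ioo xb1 xb2) (hPa : P astar = 0) (hQb : Q bstar = 0) :
    ∃ β : ℝ → ℝ,
      (∀ x ∈ Ico astar xb2, x_s < β x ∧ Q (β x) = P x ∧ ∀ z, x_s < z → Q z = P x → z = β x) ∧
      StrictAntiOn β (Ico astar xb2) ∧ β astar = bstar := by
  obtain ⟨hQmono, hQanti⟩ := strictMonoOn_Iic_strictAntiOn_Ici_of_hasDerivAt hQ hw hfs hxs
  have hxb2 : xb2 < x_s := hfs.lt_iff_gt.1 (by rw [hxs, ← hroot2]; exact hfbs xb2)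
  have hPmono : StrictMonoOn P (Icc astar xb2) :=
    strictMonoOn_of_hasDerivWithinAt_pos (convex_Icc _ _)
      (fun x _ => (hP x).continuousAt.continuousWithinAt) (fun x _ => (hP x).hasDerivWithinAt)
      fun x hx => by
        rw [interior_Icc] at hx
        exact mul_pos (hw x) (hfb.pos_of_mem_Ioo hroot1 hroot2 ⟨hastar.1.trans hx.1, hx.2⟩)
  have hbstar : x_s < bstar := lt_of_not_ge fun h => (hQmono.pos_of_tendsto_atBot hQlim h).ne' hQb
  refine exists_strictAntiOn_inverse_comp hastar.2 hbstar
    (fun x _ => (hQ x).continuousAt.continuousWithinAt) hQanti (hPmono.mono Ico_subset_Icc_self)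
    (hPa.trans hQb.symm) fun x hx => (hPQ x).trans_le ?_
  exact hQmono.monotoneOn (mem_Iic.2 (by linarith [hx.2])) (mem_Iic.2 le_rfl) (by linarith [hx.2])

theorem stmt18_general
    (μ σ θ r c_s c_b : ℝ)
    (hμ : 0 < μ) (hσ : 0 < σ) (hr : 0 < r) (hcs : 0 < c_s) (hcb : 0 < c_b)
    (F G : ℝ → ℝ)
    (hF : ∀ x : ℝ, F x = ∫ u in Ioi (0:ℝ),
        u ^ (r / μ - 1) * Real.exp (Real.sqrt (2 * μ / σ ^ 2) * (x - θ) * u - u ^ 2 / 2))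
    (hG : ∀ x : ℝ, G x = ∫ u in Ioi (0:ℝ),
        u ^ (r / μ - 1) * Real.exp (Real.sqrt (2 * μ / σ ^ 2) * (θ - x) * u - u ^ 2 / 2))
    (f_s : ℝ → ℝ)
    (hfs : ∀ x : ℝ, f_s x = (μ * θ + σ ^ 2 / 2 - r) - μ * x + r * c_s * Real.exp (-x))
    (x_s : ℝ) (hxs : f_s x_s = 0)
    (f_b : ℝ → ℝ)
    (hfb : ∀ x : ℝ, f_b x = (μ * θ + σ ^ 2 / 2 - r) - μ * x - r * c_b * Real.exp (-x))
    (bstar : ℝ)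
    (hb : Real.exp bstar * F bstar = (Real.exp bstar - c_s) * deriv F bstar)
    (W Ψ : ℝ → ℝ)
    (hW : ∀ x, W x = deriv F x * G x - F x * deriv G x)
    (hWpos : ∀ x, 0 < W x)
    (hΨ : ∀ x, Ψ x = 2 * F x / (σ ^ 2 * W x))
    (q_F : ℝ → ℝ → ℝ)
    (hqF : ∀ x z : ℝ, q_F x z =
      (∫ s in Iic x, Ψ s * Real.exp s * f_b s) - ∫ s in Iic z, Ψ s * Real.exp s * f_s s)
    (xb1 xb2 : ℝ) (hroot1 : f_b xb1 = 0) (hroot2 : f_b xb2 = 0)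
    (astar : ℝ) (hastar : astar ∈ Ioo xb1 xb2)
    (hastar_eq : F astar * Real.exp astar = deriv F astar * (Real.exp astar + c_b)) :
    ∃ β : ℝ → ℝ,
      (∀ x ∈ Ico astar xb2, x_s < β x ∧ q_F x (β x) = 0 ∧
        ∀ z : ℝ, x_s < z → q_F x z = 0 → z = β x) ∧
      StrictAntiOn β (Ico astar xb2) ∧
      β astar = bstar := by
  obtain rfl : F = affineGaussMoment (r / μ - 1) √(2 * μ / σ ^ 2) θ := funext hF
  obtain rfl : G = fun x => gaussMoment (r / μ - 1) (√(2 * μ / σ ^ 2) * (θ - x)) := funext hG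
  obtain rfl : Ψ = _ := funext hΨ
  have hWexp := wronskian_ou hμ hσ.ne' hr hW
  have hfb' : ∀ x, f_b x = μ * θ + σ ^ 2 / 2 - r - μ * x + r * (-c_b) * exp (-x) := fun x => by
    rw [hfb]
    ring
  have hint := integral_Iic_eq_smoothFit_ou hμ hσ.ne' hr (hWpos θ) hWexp
  set F := affineGaussMoment (r / μ - 1) √(2 * μ / σ ^ 2) θ
  set P := smoothFit F (deriv F) W (-c_b)
  set Q := smoothFit F (deriv F) W c_s
  obtain ⟨β, hβ, hanti, hβa⟩ := exists_strictAntiOn_crossing (P := P) (Q := Q)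
    (fun x => by rw [hfb']; exact hasDerivAt_smoothFit_ou hμ hσ.ne' hr (hWpos θ) hWexp _ x)
    (fun x => by rw [hfs]; exact hasDerivAt_smoothFit_ou hμ hσ.ne' hr (hWpos θ) hWexp _ x)
    (fun x => mul_pos (div_pos (mul_pos two_pos (gaussMoment_pos (by linarith [div_pos hr hμ]) _))
      (mul_pos (by positivity) (hWpos x))) (exp_pos x))
    (tendsto_smoothFit_ou_atBot hμ hσ.ne' hr (hWpos θ) hWexp c_s)
    (fun x => smoothFit_lt_smoothFit (deriv_ouF_pos hμ hσ.ne' hr x) (hWpos x) (by linarith))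
    (by rw [funext hfs]; exact strictAnti_sub_mul_add_mul_exp_neg _ hμ (by positivity)) hxs
    (by rw [funext hfb]; exact strictConcaveOn_sub_mul_sub_mul_exp_neg _ μ (mul_pos hr hcb))
    hroot1 hroot2
    (fun x => by rw [hfb, hfs]; nlinarith [exp_pos (-x), mul_pos hr hcs, mul_pos hr hcb])
    hastar (smoothFit_eq_zero (by rw [sub_neg_eq_add]; exact hastar_eq))
    (smoothFit_eq_zero (by linear_combination hb))
  refine ⟨β, fun x hx => ?_, hanti, hβa⟩
  have hq : ∀ z, q_F x z = P x - Q z := fun z => by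
    simp only [hqF, hfb', hfs, hint, P, Q]
  obtain ⟨hxβ, hQβ, huniq⟩ := hβ x hx
  exact ⟨hxβ, by rw [hq, hQβ, sub_self], fun z hz hqz => huniq z hz (by linarith [hq z])⟩

/-- If f_b has two distinct roots x_{b1} < x_{b2} and
ã* ∈ (x_{b1}, x_{b2}) satisfies F(ã*)e^{ã*} = F'(ã*)(e^{ã*} + c_b), then for every
x ∈ [ã*, x_{b2}) there is a unique β(x) > x_s with q_F(x, β(x)) = 0; β is strictly
decreasing on [ã*, x_{b2}); and β(ã*) = b*. -/
theorem stmt18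
    (μ σ θ r c_s c_b : ℝ)
    (hμ : 0 < μ) (hσ : 0 < σ) (hr : 0 < r) (hcs : 0 < c_s) (hcb : 0 < c_b)
    (F G : ℝ → ℝ)
    (hF : ∀ x : ℝ, F x = ∫ u in Ioi (0:ℝ),
        u ^ (r / μ - 1) * Real.exp (Real.sqrt (2 * μ / σ ^ 2) * (x - θ) * u - u ^ 2 / 2))
    (hG : ∀ x : ℝ, G x = ∫ u in Ioi (0:ℝ),
        u ^ (r / μ - 1) * Real.exp (Real.sqrt (2 * μ / σ ^ 2) * (θ - x) * u - u ^ 2 / 2))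
    (f_s : ℝ → ℝ)
    (hfs : ∀ x : ℝ, f_s x = (μ * θ + σ ^ 2 / 2 - r) - μ * x + r * c_s * Real.exp (-x))
    (x_s : ℝ) (hxs : f_s x_s = 0) (hxs_uniq : ∀ y, f_s y = 0 → y = x_s)
    (f_b : ℝ → ℝ)
    (hfb : ∀ x : ℝ, f_b x = (μ * θ + σ ^ 2 / 2 - r) - μ * x - r * c_b * Real.exp (-x))
    (bstar : ℝ)
    (hb : Real.exp bstar * F bstar = (Real.exp bstar - c_s) * deriv F bstar)
    (hb_uniq : ∀ b', Real.exp b' * F b' = (Real.exp b' - c_s) * deriv F b' → b' = bstar)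
    (W Ψ : ℝ → ℝ)
    (hW : ∀ x, W x = deriv F x * G x - F x * deriv G x)
    (hWpos : ∀ x, 0 < W x)
    (hΨ : ∀ x, Ψ x = 2 * F x / (σ ^ 2 * W x))
    (q_F : ℝ → ℝ → ℝ)
    (hqF : ∀ x z : ℝ, q_F x z =
      (∫ s in Iic x, Ψ s * Real.exp s * f_b s) - ∫ s in Iic z, Ψ s * Real.exp s * f_s s)
    (xb1 xb2 : ℝ) (hlt : xb1 < xb2) (hroot1 : f_b xb1 = 0) (hroot2 : f_b xb2 = 0)
    (astar : ℝ) (hastar : astar ∈ Ioo xb1 xb2)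
    (hastar_eq : F astar * Real.exp astar = deriv F astar * (Real.exp astar + c_b)) :
    ∃ β : ℝ → ℝ,
      (∀ x ∈ Ico astar xb2, x_s < β x ∧ q_F x (β x) = 0 ∧
        ∀ z : ℝ, x_s < z → q_F x z = 0 → z = β x) ∧
      StrictAntiOn β (Ico astar xb2) ∧
      β astar = bstar :=
  stmt18_general μ σ θ r c_s c_b hμ hσ hr hcs hcb F G hF hG f_s hfs x_s hxs f_b hfb bstar hb W Ψ hW
    hWpos hΨ q_F hqF xb1 xb2 hroot1 hroot2 astar hastar hastar_eq
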